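/- arXiv:1904.00219 — 4 statements merged into one kernel-verified Lean document; each statement's English description precedes it below -/
import Mathlib

section
/- Let r ∈ ℚ with 0 < r < 1 and n(r) > 1 (so 1 < n(r) < d(r) and S_r is atomic). Then for every k ∈ ℕ: (i) if k < n(r), then U_k(S_r) = {k}; (ii) if n(r) ≤ k < d(r), then U_k(S_r) = { k + j·(d(r) − n(r)) : j ∈ ℕ₀ }; (iii) if k ≥ d(r), then there exists a negative integer ℓ such that U_k(S_r) = { k + j·(d(r) − n(r)) : j ∈ ℤ, j ≥ ℓ }. -/
open Finsupp
open scoped ENNReal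

/-- The Puiseux monoid (rational cyclic semiring) `S_r`, the additive submonoid of `ℚ`
generated by the nonnegative powers of `r`. -/
def S (r : ℚ) : AddSubmonoid ℚ := AddSubmonoid.closure {x : ℚ | ∃ n : ℕ, x = r ^ n}

/-- A factorization of `x` over the powers of `r`: a finitely supported choice of
coefficients `α i` with `∑ α i * r ^ i = x`. -/
def IsFactorization (r x : ℚ) (α : ℕ →₀ ℕ) : Prop :=
  (α.sum fun i c => (c : ℚ) * r ^ i) = x

/-- The length of a factorization. -/
def flen (α : ℕ →₀ ℕ) : ℕ := α.sum fun _ c => c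

/-- The set of lengths of factorizations of `x` over the powers of `r`. -/
def lengthSet (r x : ℚ) : Set ℕ :=
  {t | ∃ α : ℕ →₀ ℕ, IsFactorization r x α ∧ flen α = t}

/-- An atom of `S_r`: a nonzero element that is not the sum of two nonzero elements. -/
def IsAtomS (r a : ℚ) : Prop :=
  a ∈ S r ∧ a ≠ 0 ∧ ¬ ∃ y z : ℚ, y ∈ S r ∧ z ∈ S r ∧ y ≠ 0 ∧ z ≠ 0 ∧ a = y + z

/-- The set of lengths of `x` as sums of atoms of `S_r`. -/
def atomLengthSet (r x : ℚ) : Set ℕ :=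
  {t | ∃ f : Fin t → ℚ, (∀ i, IsAtomS r (f i)) ∧ ∑ i, f i = x}

/-- The union of the sets of lengths (over atoms) of elements of `S_r` containing `k`. -/
def Uk (r : ℚ) (k : ℕ) : Set ℕ :=
  {l | ∃ x ∈ S r, x ≠ 0 ∧ k ∈ atomLengthSet r x ∧ l ∈ atomLengthSet r x}

/-!
Write `r = n / d`. Factorizations of `x ∈ S r` are finitely supported `α` with `∑ α i * r ^ i = x`,
the atoms are exactly the powers `r ^ i`, so lengths are degrees of such `α`. Since
`n * r ^ i = d * r ^ (i + 1)`, exchanging `n` copies of `r ^ i` for `d` copies of `r ^ (i + 1)`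
changes the length by `d - n`; after clearing denominators, `d ≡ n` is a unit modulo `d - n`, so
all lengths of `x` are congruent modulo `d - n`. A factorization using fewer than `d` copies of
each `r ^ (i + 1)` is unique (read off the top coefficient modulo `d`), and every other one
reaches it by length-decreasing exchanges, so it is the shortest. Hence the lengths of `x` form a
progression with difference `d - n` down to that shortest one, and they are unbounded above as
soon as some coefficient reaches `n`. For `k < n` the factorization `k • 1` is the only one; for
`n ≤ k < d` it is the shortest; for `k ≥ d` the element `(k - d) + d * r` also has a factorization
of length `k - (d - n)`.
-/

open Finset

namespace CyclicSemiring

noncomputable def evalPow (r : ℚ) : (ℕ →₀ ℕ) →ₗ[ℕ] ℚ := Finsupp.linearCombination ℕ (r ^ ·)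

variable {r x : ℚ} {α β : ℕ →₀ ℕ}

@[simp]
lemma evalPow_single (r : ℚ) (i c : ℕ) : evalPow r (.single i c) = c * r ^ i := by
  simp [evalPow, nsmul_eq_mul]

lemma isFactorization_iff : IsFactorization r x α ↔ evalPow r α = x := by
  simp [IsFactorization, evalPow, Finsupp.linearCombination_apply, nsmul_eq_mul]

lemma flen_eq_degree (α : ℕ →₀ ℕ) : flen α = α.degree := rfl

lemma lengthSet_eq (r x : ℚ) : lengthSet r x = {t | ∃ α, evalPow r α = x ∧ α.degree = t} := by
  simp only [lengthSet, isFactorization_iff, flen_eq_degree]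

lemma mem_S_iff : x ∈ S r ↔ ∃ α, evalPow r α = x := by
  have : {x : ℚ | ∃ n : ℕ, x = r ^ n} = Set.range (r ^ ·) := by
    ext; simp [eq_comm]
  rw [S, this, ← Submodule.span_nat_eq_addSubmonoidClosure, Submodule.mem_toAddSubmonoid,
    evalPow, ← Finsupp.range_linearCombination, LinearMap.mem_range]

lemma evalPow_pos (h0 : 0 < r) (hα : α ≠ 0) : 0 < evalPow r α := by
  obtain ⟨i, hi⟩ := Finsupp.support_nonempty_iff.mpr hα
  rw [evalPow, Finsupp.linearCombination_apply]
  exact Finset.sum_pos (fun j hj => nsmul_pos (pow_pos h0 j) (Finsupp.mem_support_iff.mp hj))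
    ⟨i, hi⟩

lemma evalPow_eq_sum_range {N : ℕ} (h : α.support ⊆ range N) :
    evalPow r α = ∑ i ∈ range N, α i * r ^ i := by
  rw [evalPow, Finsupp.linearCombination_apply, Finsupp.sum_of_support_subset α h _ (by simp)]
  simp [nsmul_eq_mul]

lemma degree_eq_sum_range {N : ℕ} (h : α.support ⊆ range N) :
    α.degree = ∑ i ∈ range N, α i :=
  Finsupp.sum_of_support_subset α h (fun _ c => c) fun _ _ => rfl

lemma exists_eq_add_single {i c : ℕ} (hc : c ≤ α i) : ∃ β, α = β + single i c :=
  ⟨α - single i c, (tsub_add_cancel_of_le (Finsupp.single_le_iff.mpr hc)).symm⟩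

lemma exists_eq_add_single_one (hα : α ≠ 0) : ∃ i β, α = β + single i 1 := by
  obtain ⟨i, hi⟩ := Finsupp.support_nonempty_iff.mpr hα
  exact ⟨i, exists_eq_add_single (Nat.one_le_iff_ne_zero.mpr (Finsupp.mem_support_iff.mp hi))⟩

lemma exists_sum_pow_eq_evalPow (r : ℚ) :
    ∀ (t : ℕ) (α : ℕ →₀ ℕ), α.degree = t → ∃ g : Fin t → ℕ, ∑ j, r ^ g j = evalPow r α
  | 0, α, h => ⟨Fin.elim0, by simp [(degree_eq_zero_iff α).mp h]⟩
  | t + 1, α, h => by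
    obtain ⟨i, β, rfl⟩ := exists_eq_add_single_one (α := α) (by rintro rfl; simp at h)
    obtain ⟨g, hg⟩ := exists_sum_pow_eq_evalPow r t β (by simpa using h)
    exact ⟨Fin.cons i g, by simp [Fin.sum_univ_succ, hg, add_comm]⟩

section ClearedSum

variable {n d N : ℕ} {a b : ℕ → ℕ}

/-- `d ^ N * ∑_{i ≤ N} a i * (n / d) ^ i`, with the denominators cleared. -/
def clearedSum (n d N : ℕ) (a : ℕ → ℕ) : ℕ := ∑ i ∈ range (N + 1), a i * n ^ i * d ^ (N - i)

lemma clearedSum_zero : clearedSum n d 0 a = a 0 := by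
  simp [clearedSum]

lemma clearedSum_succ :
    clearedSum n d (N + 1) a = d * clearedSum n d N a + a (N + 1) * n ^ (N + 1) := by
  rw [clearedSum, sum_range_succ, clearedSum, Finset.mul_sum, Nat.sub_self, pow_zero, mul_one]
  congr 1
  refine sum_congr rfl fun i hi => ?_
  rw [Nat.sub_add_comm (mem_range_succ_iff.mp hi), pow_succ]
  ring

lemma cast_clearedSum (hr : (n : ℚ) = d * r) :
    (clearedSum n d N a : ℚ) = d ^ N * ∑ i ∈ range (N + 1), a i * r ^ i := by
  rw [clearedSum, Finset.mul_sum]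
  push_cast
  refine sum_congr rfl fun i hi => ?_
  rw [hr, mul_pow, ← pow_sub_mul_pow (d : ℚ) (mem_range_succ_iff.mp hi)]
  ring

lemma clearedSum_modEq (hnd : n ≤ d) :
    clearedSum n d N a ≡ (∑ i ∈ range (N + 1), a i) * n ^ N [MOD d - n] := by
  rw [← ZMod.natCast_eq_natCast_iff]
  have hdn : (d : ZMod (d - n)) = n := by
    calc (d : ZMod (d - n)) = ((d - n : ℕ) : ZMod (d - n)) + n := by
          rw [← Nat.cast_add, Nat.sub_add_cancel hnd]
      _ = n := by rw [ZMod.natCast_self, zero_add]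
  simp only [clearedSum, Nat.cast_sum, Nat.cast_mul, Nat.cast_pow, hdn, Finset.sum_mul]
  refine sum_congr rfl fun i hi => ?_
  rw [mul_assoc, ← pow_add, Nat.add_sub_cancel' (mem_range_succ_iff.mp hi)]

lemma eq_of_clearedSum_eq (hcop : n.Coprime d) (hd : 0 < d) (ha : ∀ i, a (i + 1) < d)
    (hb : ∀ i, b (i + 1) < d) (h : clearedSum n d N a = clearedSum n d N b) :
    ∀ i ≤ N, a i = b i := by
  induction N with
  | zero =>
    intro i hi
    rw [Nat.le_zero.mp hi, ← clearedSum_zero (n := n) (d := d) (a := a), h, clearedSum_zero]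
  | succ N ih =>
    rw [clearedSum_succ, clearedSum_succ] at h
    -- Modulo `d` only the top coefficients survive, and `n` is invertible modulo `d`.
    have htop : a (N + 1) = b (N + 1) := by
      have hmod : a (N + 1) * n ^ (N + 1) ≡ b (N + 1) * n ^ (N + 1) [MOD d] := by
        simpa [Nat.ModEq, Nat.mul_add_mod] using congrArg (· % d) h
      exact (hmod.cancel_right_of_coprime ((hcop.pow_left _).symm)).eq_of_lt_of_lt (ha N) (hb N)
    rw [htop, add_left_inj, mul_right_inj' hd.ne'] at h
    intro i hi
    rcases Nat.of_le_succ hi with hi | rfl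
    · exact ih h i hi
    · exact htop

end ClearedSum

section Exchange

variable {n d : ℕ}

lemma exists_subset_range_succ (α β : ℕ →₀ ℕ) :
    ∃ N, α.support ⊆ range (N + 1) ∧ β.support ⊆ range (N + 1) := by
  obtain ⟨N, hN⟩ := exists_nat_subset_range (α.support ∪ β.support)
  exact ⟨N, fun i hi => range_subset_range.mpr N.le_succ (hN (mem_union_left _ hi)),
    fun i hi => range_subset_range.mpr N.le_succ (hN (mem_union_right _ hi))⟩

lemma clearedSum_eq_of_evalPow_eq (hr : (n : ℚ) = d * r) {N : ℕ}
    (hα : α.support ⊆ range (N + 1)) (hβ : β.support ⊆ range (N + 1))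
    (h : evalPow r α = evalPow r β) : clearedSum n d N α = clearedSum n d N β := by
  rw [← Nat.cast_inj (R := ℚ), cast_clearedSum hr, cast_clearedSum hr,
    ← evalPow_eq_sum_range hα, ← evalPow_eq_sum_range hβ, h]

lemma degree_modEq_of_evalPow_eq (hr : (n : ℚ) = d * r) (hnd : n ≤ d) (hcop : n.Coprime d)
    (h : evalPow r α = evalPow r β) : α.degree ≡ β.degree [MOD d - n] := by
  obtain ⟨N, hα, hβ⟩ := exists_subset_range_succ α β
  have hN : α.degree * n ^ N ≡ β.degree * n ^ N [MOD d - n] := by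
    rw [degree_eq_sum_range hα, degree_eq_sum_range hβ]
    calc _ ≡ clearedSum n d N α [MOD d - n] := (clearedSum_modEq hnd).symm
      _ = clearedSum n d N β := clearedSum_eq_of_evalPow_eq hr hα hβ h
      _ ≡ _ [MOD d - n] := clearedSum_modEq hnd
  exact hN.cancel_right_of_coprime
    (Nat.Coprime.pow_right _ ((Nat.coprime_sub_self_right hnd).mpr hcop).symm)

/-- Normal form: no exchange of `d` copies of `r ^ (i + 1)` for `n` copies of `r ^ i` applies. -/
def IsReduced (d : ℕ) (α : ℕ →₀ ℕ) : Prop := ∀ i, α (i + 1) < d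

lemma IsReduced.eq_of_evalPow_eq (hr : (n : ℚ) = d * r) (hcop : n.Coprime d) (hd : 0 < d)
    (hα : IsReduced d α) (hβ : IsReduced d β) (h : evalPow r α = evalPow r β) : α = β := by
  obtain ⟨N, hαN, hβN⟩ := exists_subset_range_succ α β
  have hle := eq_of_clearedSum_eq hcop hd hα hβ (clearedSum_eq_of_evalPow_eq hr hαN hβN h)
  ext i
  by_cases hi : i ≤ N
  · exact hle i hi
  · have hi' : i ∉ range (N + 1) := by simpa using hi
    rw [Finsupp.notMem_support_iff.mp fun h => hi' (hαN h),
      Finsupp.notMem_support_iff.mp fun h => hi' (hβN h)]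

lemma exists_exchange {i j c e : ℕ} (h : evalPow r (single i c) = evalPow r (single j e))
    (hc : c ≤ α i) :
    ∃ γ, evalPow r γ = evalPow r α ∧ γ.degree + c = α.degree + e ∧ e ≤ γ j := by
  obtain ⟨β, rfl⟩ := exists_eq_add_single hc
  refine ⟨β + single j e, ?_, ?_, by simp⟩
  · rw [map_add, map_add, h]
  · simp only [map_add, Finsupp.degree_single]
    ring

lemma evalPow_single_num (hr : (n : ℚ) = d * r) (i : ℕ) :
    evalPow r (single i n) = evalPow r (single (i + 1) d) := by
  simp only [evalPow_single, hr, pow_succ]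
  ring

end Exchange

section Descent

variable {n d : ℕ}

lemma exists_descent (hr : (n : ℚ) = d * r) (hnd : n ≤ d) (hα : ¬IsReduced d α) :
    ∃ γ, evalPow r γ = evalPow r α ∧ γ.degree + (d - n) = α.degree ∧ ∃ i, n ≤ γ i := by
  obtain ⟨i, hi⟩ : ∃ i, d ≤ α (i + 1) := by simpa [IsReduced] using hα
  obtain ⟨γ, hγ, hdeg, hn⟩ := exists_exchange (evalPow_single_num hr i).symm hi
  exact ⟨γ, hγ, by omega, i, hn⟩

lemma IsReduced.degree_le (hr : (n : ℚ) = d * r) (hcop : n.Coprime d) (hnd : n < d)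
    (hα : IsReduced d α) (h : evalPow r β = evalPow r α) : α.degree ≤ β.degree := by
  induction hm : β.degree using Nat.strong_induction_on generalizing β with
  | _ m ih =>
    by_cases hβ : IsReduced d β
    · rw [← hm, hβ.eq_of_evalPow_eq hr hcop (by omega) hα h]
    · obtain ⟨γ, hγ, hdeg, -⟩ := exists_descent hr hnd.le hβ
      exact (ih γ.degree (by omega) (hγ.trans h) rfl).trans (by omega)

lemma eq_of_degree_lt_num (hr : (n : ℚ) = d * r) (hcop : n.Coprime d) (hnd : n < d)
    (hα : α.degree < n) (h : evalPow r β = evalPow r α) : β = α := by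
  have hαred : IsReduced d α := fun i => by have := le_degree (i + 1) α; omega
  induction hm : β.degree using Nat.strong_induction_on generalizing β with
  | _ m ih =>
    by_cases hβ : IsReduced d β
    · exact hβ.eq_of_evalPow_eq hr hcop (by omega) hαred h
    · obtain ⟨γ, hγ, hdeg, i, hi⟩ := exists_descent hr hnd.le hβ
      have := le_degree i α
      rw [ih γ.degree (by omega) (hγ.trans h) rfl] at hi
      omega

lemma exists_degree_add_mul_eq (hr : (n : ℚ) = d * r) (hcop : n.Coprime d) (hnd : n < d)
    (h : evalPow r β = evalPow r α) {u : ℕ} (hu : β.degree + u * (d - n) ≤ α.degree) :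
    ∃ γ, evalPow r γ = evalPow r α ∧ γ.degree + u * (d - n) = α.degree := by
  induction u with
  | zero => exact ⟨α, rfl, by simp⟩
  | succ u ih =>
    obtain ⟨γ, hγ, hdeg⟩ := ih (le_trans (by gcongr; omega) hu)
    have hlt : β.degree < γ.degree := by rw [add_one_mul] at hu; omega
    have hγred : ¬IsReduced d γ := fun hred =>
      (hred.degree_le hr hcop hnd (h.trans hγ.symm)).not_gt hlt
    obtain ⟨γ', hγ', hdeg', -⟩ := exists_descent hr hnd.le hγred
    exact ⟨γ', hγ'.trans hγ, by rw [add_one_mul]; omega⟩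

lemma exists_degree_eq_add_mul (hr : (n : ℚ) = d * r) (hnd : n ≤ d) {i : ℕ} (hα : n ≤ α i)
    (j : ℕ) : ∃ γ, evalPow r γ = evalPow r α ∧ γ.degree = α.degree + j * (d - n) := by
  induction j generalizing α i with
  | zero => exact ⟨α, rfl, by simp⟩
  | succ j ih =>
    obtain ⟨α', hα', hdeg, hd⟩ := exists_exchange (evalPow_single_num hr i) hα
    obtain ⟨γ, hγ, hγdeg⟩ := ih (hnd.trans hd)
    exact ⟨γ, hγ.trans hα', by rw [hγdeg, add_one_mul]; omega⟩

end Descent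

section Atoms

variable {n d : ℕ} {a : ℚ}

lemma pow_mem_S (r : ℚ) (i : ℕ) : r ^ i ∈ S r := AddSubmonoid.subset_closure ⟨i, rfl⟩

lemma isAtomS_iff (hr : (n : ℚ) = d * r) (hcop : n.Coprime d) (hnd : n < d) (hn : 2 ≤ n) :
    IsAtomS r a ↔ ∃ i, a = r ^ i := by
  have hr0 : r ≠ 0 := by rintro rfl; simp at hr; omega
  constructor
  · rintro ⟨hmem, hne, hnot⟩
    obtain ⟨α, rfl⟩ := mem_S_iff.mp hmem
    obtain ⟨i, β, rfl⟩ := exists_eq_add_single_one (α := α) (by rintro rfl; simp at hne)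
    refine ⟨i, ?_⟩
    by_contra hβ
    refine hnot ⟨evalPow r β, r ^ i, mem_S_iff.mpr ⟨β, rfl⟩, pow_mem_S r i, ?_, pow_ne_zero i hr0,
      by simp⟩
    rintro h
    simp [h] at hβ
  · rintro ⟨i, rfl⟩
    refine ⟨pow_mem_S r i, pow_ne_zero i hr0, ?_⟩
    rintro ⟨_, _, hy, hz, hy0, hz0, hyz⟩
    obtain ⟨β, rfl⟩ := mem_S_iff.mp hy
    obtain ⟨γ, rfl⟩ := mem_S_iff.mp hz
    have h := congrArg degree <| eq_of_degree_lt_num hr hcop hnd (α := single i 1)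
      (β := β + γ) (by simp; omega) (by simp [hyz])
    have hβ : β.degree ≠ 0 := fun h => hy0 (by simp [(degree_eq_zero_iff β).mp h])
    have hγ : γ.degree ≠ 0 := fun h => hz0 (by simp [(degree_eq_zero_iff γ).mp h])
    simp only [map_add, degree_single] at h
    omega

lemma atomLengthSet_eq_lengthSet (hr : (n : ℚ) = d * r) (hcop : n.Coprime d) (hnd : n < d)
    (hn : 2 ≤ n) (x : ℚ) : atomLengthSet r x = lengthSet r x := by
  ext t
  rw [lengthSet_eq]
  constructor
  · rintro ⟨f, hf, rfl⟩
    choose g hg using fun j => (isAtomS_iff hr hcop hnd hn).mp (hf j)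
    exact ⟨∑ j, single (g j) 1, by simp [hg], by simp⟩
  · rintro ⟨α, rfl, rfl⟩
    obtain ⟨g, hg⟩ := exists_sum_pow_eq_evalPow r α.degree α rfl
    exact ⟨fun j => r ^ g j, fun j => (isAtomS_iff hr hcop hnd hn).mpr ⟨g j, rfl⟩, hg⟩

end Atoms

lemma le_and_modEq_iff_exists_nat {k m δ : ℕ} :
    k ≤ m ∧ m ≡ k [MOD δ] ↔ ∃ j : ℕ, m = k + j * δ := by
  constructor
  · rintro ⟨hkm, hmod⟩
    obtain ⟨j, hj⟩ := (Nat.modEq_iff_dvd' hkm).mp hmod.symm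
    exact ⟨j, by rw [mul_comm, ← hj]; omega⟩
  · rintro ⟨j, rfl⟩
    exact ⟨Nat.le_add_right k _, Nat.add_mul_mod_self_right k j δ⟩

lemma le_and_modEq_iff_exists_int {M k m δ t : ℕ} (hδ : 0 < δ) (hk : M + t * δ = k) :
    M ≤ m ∧ m ≡ k [MOD δ] ↔ ∃ j : ℤ, -t ≤ j ∧ (m : ℤ) = k + j * δ := by
  rw [Nat.modEq_iff_dvd]
  constructor
  · rintro ⟨hMm, c, hc⟩
    refine ⟨-c, ?_, by linarith⟩
    have : (M : ℤ) + t * δ = k := by exact_mod_cast hk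
    nlinarith
  · rintro ⟨j, hj, hm⟩
    have : (M : ℤ) + t * δ = k := by exact_mod_cast hk
    refine ⟨?_, -j, by rw [hm]; ring⟩
    have : (M : ℤ) ≤ m := by nlinarith
    exact_mod_cast this

section Uk

variable {k : ℕ}

lemma num_toNat_eq_den_mul (h0 : 0 ≤ r) : (r.num.toNat : ℚ) = r.den * r := by
  rw [mul_comm, Rat.mul_den_eq_num]
  exact_mod_cast Int.toNat_of_nonneg (Rat.num_nonneg.mpr h0)

lemma coprime_num_toNat_den (h0 : 0 ≤ r) : r.num.toNat.Coprime r.den := by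
  convert r.reduced using 1
  have := Rat.num_nonneg.mpr h0
  omega

lemma num_toNat_lt_den (h1 : r < 1) : r.num.toNat < r.den := by
  have := Rat.num_lt_denom_iff.mpr h1
  have := r.den_pos
  omega

lemma mem_Uk_iff (h0 : 0 < r) (h1 : r < 1) (hn : 1 < r.num) (hk : 0 < k) {l : ℕ} :
    l ∈ Uk r k ↔ ∃ α β, evalPow r α = evalPow r β ∧ α.degree = k ∧ β.degree = l := by
  simp only [Uk, atomLengthSet_eq_lengthSet (num_toNat_eq_den_mul h0.le)
    (coprime_num_toNat_den h0.le) (num_toNat_lt_den h1) (by omega), lengthSet_eq,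
    Set.mem_ofPred_eq]
  constructor
  · rintro ⟨x, -, -, ⟨α, rfl, hα⟩, β, hβ, hβl⟩
    exact ⟨α, β, hβ.symm, hα, hβl⟩
  · rintro ⟨α, β, h, hα, hβ⟩
    have hα0 : α ≠ 0 := by rintro rfl; simp at hα; omega
    exact ⟨evalPow r α, mem_S_iff.mpr ⟨α, rfl⟩, (evalPow_pos h0 hα0).ne', ⟨α, rfl, hα⟩,
      β, h.symm, hβ⟩

lemma self_mem_Uk (h0 : 0 < r) (h1 : r < 1) (hn : 1 < r.num) (hk : 0 < k) : k ∈ Uk r k :=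
  (mem_Uk_iff h0 h1 hn hk).mpr ⟨single 0 k, single 0 k, rfl, by simp, by simp⟩

lemma Uk_eq_singleton (h0 : 0 < r) (h1 : r < 1) (hn : 1 < r.num) (hk : 0 < k)
    (hkn : k < r.num.toNat) : Uk r k = {k} := by
  refine Set.eq_singleton_iff_unique_mem.mpr ⟨self_mem_Uk h0 h1 hn hk, fun l hl => ?_⟩
  obtain ⟨α, β, h, rfl, rfl⟩ := (mem_Uk_iff h0 h1 hn hk).mp hl
  rw [eq_of_degree_lt_num (num_toNat_eq_den_mul h0.le) (coprime_num_toNat_den h0.le)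
    (num_toNat_lt_den h1) hkn h.symm]

lemma mem_Uk_iff_sInf_le_and_modEq (h0 : 0 < r) (h1 : r < 1) (hn : 1 < r.num) (hk : 0 < k)
    (hnk : r.num.toNat ≤ k) {m : ℕ} :
    m ∈ Uk r k ↔ sInf (Uk r k) ≤ m ∧ m ≡ k [MOD r.den - r.num.toNat] := by
  have hr := num_toNat_eq_den_mul h0.le
  have hcop := coprime_num_toNat_den h0.le
  have hnd := num_toNat_lt_den h1
  constructor
  · intro hm
    obtain ⟨α, β, h, rfl, rfl⟩ := (mem_Uk_iff h0 h1 hn hk).mp hm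
    exact ⟨Nat.sInf_le hm, (degree_modEq_of_evalPow_eq hr hnd.le hcop h).symm⟩
  · rintro ⟨hMm, hmod⟩
    rcases le_or_gt k m with hkm | hmk
    · obtain ⟨j, rfl⟩ := le_and_modEq_iff_exists_nat.mp ⟨hkm, hmod⟩
      obtain ⟨γ, hγ, hdeg⟩ := exists_degree_eq_add_mul hr hnd.le (α := single 0 k) (i := 0)
        (by simpa using hnk) j
      exact (mem_Uk_iff h0 h1 hn hk).mpr ⟨single 0 k, γ, hγ.symm, by simp, by simpa using hdeg⟩
    · -- Descend from a factorization of length `k` towards one of minimal length.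
      obtain ⟨α, β, h, hα, hβ⟩ :=
        (mem_Uk_iff h0 h1 hn hk).mp (Nat.sInf_mem ⟨k, self_mem_Uk h0 h1 hn hk⟩)
      obtain ⟨u, hu⟩ := (Nat.modEq_iff_dvd' hmk.le).mp hmod
      obtain ⟨γ, hγ, hdeg⟩ := exists_degree_add_mul_eq hr hcop hnd h.symm (u := u)
        (by rw [hα, hβ, mul_comm, ← hu]; omega)
      exact (mem_Uk_iff h0 h1 hn hk).mpr
        ⟨α, γ, hγ.symm, hα, by rw [hα, mul_comm, ← hu] at hdeg; omega⟩

lemma sInf_Uk_of_lt_den (h0 : 0 < r) (h1 : r < 1) (hn : 1 < r.num) (hk : 0 < k)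
    (hkd : k < r.den) : sInf (Uk r k) = k := by
  refine le_antisymm (Nat.sInf_le (self_mem_Uk h0 h1 hn hk))
    (le_csInf ⟨k, self_mem_Uk h0 h1 hn hk⟩ fun m hm => ?_)
  obtain ⟨α, β, h, rfl, rfl⟩ := (mem_Uk_iff h0 h1 hn hk).mp hm
  have hα : IsReduced r.den α := fun i => (le_degree (i + 1) α).trans_lt hkd
  exact hα.degree_le (num_toNat_eq_den_mul h0.le) (coprime_num_toNat_den h0.le)
    (num_toNat_lt_den h1) h.symm

lemma sInf_Uk_add_le_of_den_le (h0 : 0 < r) (h1 : r < 1) (hn : 1 < r.num) (hdk : r.den ≤ k) :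
    sInf (Uk r k) + (r.den - r.num.toNat) ≤ k := by
  have hk : 0 < k := r.pos.trans_le hdk
  set α : ℕ →₀ ℕ := single 0 (k - r.den) + single 1 r.den
  have hα : α.degree = k := by simp only [α, map_add, degree_single]; omega
  obtain ⟨γ, hγ, hdeg, -⟩ := exists_descent (α := α) (num_toNat_eq_den_mul h0.le)
    (num_toNat_lt_den h1).le fun h => (h 0).ne (by simp [α])
  have hmem : γ.degree ∈ Uk r k := (mem_Uk_iff h0 h1 hn hk).mpr ⟨α, γ, hγ.symm, hα, rfl⟩
  have := Nat.sInf_le hmem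
  omega

lemma Uk_eq_of_num_le_of_lt_den (h0 : 0 < r) (h1 : r < 1) (hn : 1 < r.num) (hk : 0 < k)
    (hnk : r.num.toNat ≤ k) (hkd : k < r.den) :
    Uk r k = {l : ℕ | ∃ j : ℕ, l = k + j * (r.den - r.num.toNat)} := by
  ext m
  rw [mem_Uk_iff_sInf_le_and_modEq h0 h1 hn hk hnk, sInf_Uk_of_lt_den h0 h1 hn hk hkd]
  exact le_and_modEq_iff_exists_nat

lemma exists_Uk_eq_of_den_le (h0 : 0 < r) (h1 : r < 1) (hn : 1 < r.num) (hdk : r.den ≤ k) :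
    ∃ L : ℤ, L < 0 ∧
      Uk r k = {m : ℕ | ∃ j : ℤ, L ≤ j ∧ (m : ℤ) = k + j * ((r.den : ℤ) - r.num)} := by
  have hk : 0 < k := r.pos.trans_le hdk
  have hnd := num_toNat_lt_den h1
  have hnk : r.num.toNat ≤ k := hnd.le.trans hdk
  have hM := sInf_Uk_add_le_of_den_le h0 h1 hn hdk
  obtain ⟨-, hmod⟩ := (mem_Uk_iff_sInf_le_and_modEq h0 h1 hn hk hnk).mp
    (Nat.sInf_mem ⟨k, self_mem_Uk h0 h1 hn hk⟩)
  obtain ⟨t, ht⟩ := (Nat.modEq_iff_dvd' (by omega)).mp hmod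
  have ht0 : t ≠ 0 := by rintro rfl; omega
  have hδ : ((r.den - r.num.toNat : ℕ) : ℤ) = r.den - r.num := by
    have := Rat.num_nonneg.mpr h0.le
    omega
  refine ⟨-t, by omega, Set.ext fun m => ?_⟩
  rw [mem_Uk_iff_sInf_le_and_modEq h0 h1 hn hk hnk,
    le_and_modEq_iff_exists_int (Nat.sub_pos_of_lt hnd) (by rw [mul_comm, ← ht]; omega), hδ]
  rfl

end Uk

end CyclicSemiring

open CyclicSemiring

theorem stmt10 (r : ℚ) (h0 : 0 < r) (h1 : r < 1) (hn : 1 < r.num) (k : ℕ) (hk : 0 < k) :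
    (k < r.num.toNat → Uk r k = {k}) ∧
    (r.num.toNat ≤ k → k < r.den →
      Uk r k = {l : ℕ | ∃ j : ℕ, l = k + j * (r.den - r.num.toNat)}) ∧
    (r.den ≤ k → ∃ L : ℤ, L < 0 ∧
      Uk r k = {m : ℕ | ∃ j : ℤ, L ≤ j ∧ (m : ℤ) = k + j * ((r.den : ℤ) - r.num)}) :=
  ⟨Uk_eq_singleton h0 h1 hn hk, Uk_eq_of_num_le_of_lt_den h0 h1 hn hk,
    exists_Uk_eq_of_den_le h0 h1 hn⟩
end

section
/- Let r ∈ ℚ_{>1} \ ℕ (so n(r) > d(r) > 1 and S_r is atomic). Then for every k ∈ ℕ: (i) if k < d(r), then U_k(S_r) = {k}; (ii) if d(r) ≤ k < n(r), then U_k(S_r) = { k + j·(n(r) − d(r)) : j ∈ ℕ₀ }; (iii) if k ≥ n(r), then there exists a negative integer ℓ such that U_k(S_r) = { k + j·(n(r) − d(r)) : j ∈ ℤ, j ≥ ℓ }. -/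
/-!
Write `r = p / q`. Since `q * r ^ (i + 1) = p * r ^ i`, trading `p` copies of the atom `r ^ i` for
`q` copies of `r ^ (i + 1)` keeps the element and shortens a factorization by `p - q`. Repeating
this ends in a factorization with all coefficients below `p`, and that one is unique: after
clearing denominators, `p` divides the lowest coefficient difference, which is therefore zero.
So any two factorizations of `x` have lengths `g + s (p - q)` and `g + t (p - q)`, where `g` is
the length of the reduced one, and `g ≥ q` as soon as one move was made. Conversely `c * r ^ j`
has factorizations of lengths `c` and `c + j (p - q)` when `c ≥ q`. Hence `ℓ ∈ U_k` iff `ℓ = k`,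
or `k, ℓ ≥ q` and `ℓ ≡ k [MOD p - q]`, and the three cases are arithmetic.
-/
open Finsupp
open scoped ENNReal

theorem eq_zero_of_sum_mul_pow_mul_pow_eq_zero {R : Type*} [CommRing R] [IsDomain R] {p q : R}
    (hpq : IsCoprime p q) (hp : p ≠ 0) {a : ℕ → R} (ha : ∀ i, p ∣ a i → a i = 0) (N : ℕ)
    (h : ∑ i ∈ Finset.range N, a i * p ^ i * q ^ (N - i) = 0) : ∀ i < N, a i = 0 := by
  induction N generalizing a with
  | zero => simp
  | succ N ih =>
    have hsplit : ∑ i ∈ Finset.range (N + 1), a i * p ^ i * q ^ (N + 1 - i)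
        = p * ∑ i ∈ Finset.range N, a (i + 1) * p ^ i * q ^ (N - i) + a 0 * q ^ (N + 1) := by
      rw [Finset.sum_range_succ', Finset.mul_sum]
      simp only [Nat.add_sub_add_right, pow_succ, pow_zero, Nat.sub_zero]
      congr 1
      · exact Finset.sum_congr rfl fun i _ => by ring
      · ring
    rw [hsplit] at h
    have h0 : a 0 = 0 := by
      refine ha 0 ((hpq.pow_right (n := N + 1)).dvd_of_dvd_mul_right ?_)
      exact (dvd_add_right (dvd_mul_right _ _)).mp (h ▸ dvd_zero p)
    rw [h0, zero_mul, add_zero, mul_eq_zero] at h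
    have htail := ih (a := fun i => a (i + 1)) (fun i => ha (i + 1)) (h.resolve_left hp)
    rintro (_ | i) hi
    · exact h0
    · exact htail i (by omega)

noncomputable def evalPow (r : ℚ) : (ℕ →₀ ℕ) →ₗ[ℕ] ℚ := Finsupp.linearCombination ℕ (r ^ ·)

section evalPow

variable {r : ℚ}

@[simp]
lemma evalPow_single (i c : ℕ) : evalPow r (single i c) = c * r ^ i := by
  simp [evalPow, nsmul_eq_mul]

lemma evalPow_eq_sum_range {α : ℕ →₀ ℕ} {N : ℕ} (h : α.support ⊆ Finset.range N) :
    evalPow r α = ∑ i ∈ Finset.range N, (α i : ℚ) * r ^ i := by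
  rw [evalPow, Finsupp.linearCombination_apply, Finsupp.sum_of_support_subset _ h]
  · simp [nsmul_eq_mul]
  · simp

lemma evalPow_eq_zero_iff (hr : 0 < r) {α : ℕ →₀ ℕ} : evalPow r α = 0 ↔ α = 0 := by
  refine ⟨fun h => ?_, fun h => h ▸ map_zero _⟩
  rw [evalPow, Finsupp.linearCombination_apply, Finsupp.sum,
    Finset.sum_eq_zero_iff_of_nonneg fun i _ => by positivity] at h
  ext i
  by_contra hi
  exact hi (by simpa [hr.ne'] using h i (Finsupp.mem_support_iff.mpr hi))

lemma pow_mem_S (n : ℕ) : r ^ n ∈ S r := AddSubmonoid.subset_closure ⟨n, rfl⟩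

lemma mem_S_iff {x : ℚ} : x ∈ S r ↔ ∃ α, evalPow r α = x := by
  have hgen : {x : ℚ | ∃ n : ℕ, x = r ^ n} = Set.range (r ^ ·) := by
    ext; simp [eq_comm]
  simp only [S, hgen, AddSubmonoid.mem_closure_range_iff, evalPow,
    Finsupp.linearCombination_apply, eq_comm]

end evalPow

def IsReducedFactorization (r : ℚ) (α : ℕ →₀ ℕ) : Prop := ∀ i, α i < r.num.toNat

section reduction

variable {r : ℚ}

lemma num_toNat_cast (hr : 0 ≤ r) : (r.num.toNat : ℚ) = r.den * r := by
  rw [Rat.den_mul_eq_num, ← Int.cast_natCast, Int.toNat_of_nonneg (Rat.num_nonneg.mpr hr)]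

lemma den_lt_num_toNat (hr : 1 < r) : r.den < r.num.toNat := by
  have h : (r.den : ℚ) < r.num.toNat := by
    rw [num_toNat_cast (by positivity)]
    exact lt_mul_of_one_lt_right (by exact_mod_cast r.pos) hr
  exact_mod_cast h

theorem eq_of_isReducedFactorization_of_evalPow_eq (hr : 0 < r) {α β : ℕ →₀ ℕ}
    (hα : IsReducedFactorization r α) (hβ : IsReducedFactorization r β)
    (h : evalPow r α = evalPow r β) : α = β := by
  obtain ⟨N, hN⟩ := Finset.exists_nat_subset_range (α.support ∪ β.support)
  have hsum :
      ∑ i ∈ Finset.range N, ((α i : ℤ) - β i) * r.num ^ i * (r.den : ℤ) ^ (N - i) = 0 := by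
    have hq : (r.den : ℚ) ^ N * (evalPow r α - evalPow r β) = 0 := by rw [h, sub_self, mul_zero]
    rw [evalPow_eq_sum_range (Finset.union_subset_left hN),
      evalPow_eq_sum_range (Finset.union_subset_right hN), ← Finset.sum_sub_distrib,
      Finset.mul_sum] at hq
    refine Int.cast_injective (α := ℚ) ?_
    push_cast
    rw [← hq]
    refine Finset.sum_congr rfl fun i hi => ?_
    rw [← Rat.den_mul_eq_num, mul_pow, ← pow_mul_pow_sub _ (Finset.mem_range.mp hi).le]
    ring
  have hred : ∀ i, r.num ∣ (α i : ℤ) - β i → (α i : ℤ) - β i = 0 := fun i hi =>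
    Int.eq_zero_of_abs_lt_dvd hi (abs_sub_lt_iff.mpr ⟨by have := hα i; omega,
      by have := hβ i; omega⟩)
  have hzero := eq_zero_of_sum_mul_pow_mul_pow_eq_zero (Rat.isCoprime_num_den r)
    (Rat.num_ne_zero.mpr hr.ne') hred N hsum
  ext i
  by_cases hi : i < N
  · have := hzero i hi
    omega
  · have hsupp : i ∉ α.support ∪ β.support := fun h => hi (Finset.mem_range.mp (hN h))
    simp only [Finset.mem_union, Finsupp.mem_support_iff, not_or, not_not] at hsupp
    rw [hsupp.1, hsupp.2]

lemma den_mul_pow_succ (hr : 0 ≤ r) (i : ℕ) :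
    (r.den : ℚ) * r ^ (i + 1) = r.num.toNat * r ^ i := by
  rw [num_toNat_cast hr]; ring

theorem exists_isReducedFactorization (hr : 1 < r) (β : ℕ →₀ ℕ) :
    ∃ γ, IsReducedFactorization r γ ∧ evalPow r γ = evalPow r β ∧
      ∃ t, degree β = degree γ + t * (r.num.toNat - r.den) ∧ (t ≠ 0 → r.den ≤ degree γ) := by
  induction hn : degree β using Nat.strong_induction_on generalizing β with
  | _ n ih =>
  by_cases hred : IsReducedFactorization r β
  · exact ⟨β, hred, rfl, 0, by simp [hn], absurd rfl⟩
  obtain ⟨i, hi⟩ : ∃ i, r.num.toNat ≤ β i := by simpa [IsReducedFactorization] using hred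
  set β' := β - single i r.num.toNat
  have hβ : β = β' + single i r.num.toNat := (tsub_add_cancel_of_le (single_le_iff.mpr hi)).symm
  set δ := β' + single (i + 1) r.den
  have hqp := den_lt_num_toNat hr
  have hδ : degree δ = degree β' + r.den := by simp [δ]
  have hδβ : degree β = degree δ + (r.num.toNat - r.den) := by
    rw [hδ, hβ, map_add, degree_single]; omega
  obtain ⟨γ, hγ, hγδ, t, ht, hden⟩ := ih (degree δ) (by omega) δ rfl
  refine ⟨γ, hγ, ?_, t + 1, ?_, fun _ => ?_⟩
  · rw [hγδ, hβ, map_add, map_add, evalPow_single, evalPow_single,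
      den_mul_pow_succ (by positivity)]
  · rw [← hn, hδβ, ht]; ring
  · rcases eq_or_ne t 0 with rfl | h
    · omega
    · exact hden h

theorem exists_degree_eq_add_mul_of_evalPow_eq (hr : 1 < r) {α β : ℕ →₀ ℕ}
    (h : evalPow r α = evalPow r β) :
    ∃ g s t, degree α = g + s * (r.num.toNat - r.den) ∧ degree β = g + t * (r.num.toNat - r.den)
      ∧ (s ≠ 0 ∨ t ≠ 0 → r.den ≤ g) := by
  obtain ⟨γ, hγ, hγα, s, hs, hsγ⟩ := exists_isReducedFactorization hr α
  obtain ⟨γ', hγ', hγβ, t, ht, htγ⟩ := exists_isReducedFactorization hr β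
  obtain rfl : γ = γ' :=
    eq_of_isReducedFactorization_of_evalPow_eq (by positivity) hγ hγ' (by rw [hγα, hγβ, h])
  exact ⟨degree γ, s, t, hs, ht, fun h => h.elim hsγ htγ⟩

theorem degree_modEq_of_evalPow_eq (hr : 1 < r) {α β : ℕ →₀ ℕ}
    (h : evalPow r α = evalPow r β) : degree α ≡ degree β [MOD r.num.toNat - r.den] := by
  obtain ⟨g, s, t, hs, ht, -⟩ := exists_degree_eq_add_mul_of_evalPow_eq hr h
  rw [hs, ht]
  exact (Nat.add_mul_mod_self_right ..).trans (Nat.add_mul_mod_self_right ..).symm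

theorem den_le_degree_of_evalPow_eq (hr : 1 < r) {α β : ℕ →₀ ℕ}
    (h : evalPow r α = evalPow r β) (hne : degree α ≠ degree β) : r.den ≤ degree α := by
  obtain ⟨g, s, t, hs, ht, hg⟩ := exists_degree_eq_add_mul_of_evalPow_eq hr h
  have : s ≠ 0 ∨ t ≠ 0 := by
    by_contra! h0
    exact hne (by rw [hs, ht, h0.1, h0.2])
  exact (hg this).trans (hs ▸ Nat.le_add_right _ _)

end reduction

section atoms

variable {r : ℚ}

theorem isAtomS_pow (hr : 1 < r) (hd : r.den ≠ 1) (n : ℕ) : IsAtomS r (r ^ n) := by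
  refine ⟨pow_mem_S n, pow_ne_zero n (by positivity), ?_⟩
  rintro ⟨_, _, hy, hz, hy0, hz0, h⟩
  obtain ⟨α, rfl⟩ := mem_S_iff.mp hy
  obtain ⟨β, rfl⟩ := mem_S_iff.mp hz
  have hα : degree α ≠ 0 := by simpa [degree_eq_zero_iff] using ne_of_apply_ne _ hy0
  have hβ : degree β ≠ 0 := by simpa [degree_eq_zero_iff] using ne_of_apply_ne _ hz0
  have hv : evalPow r (single n 1) = evalPow r (α + β) := by simp [h]
  have hden := den_le_degree_of_evalPow_eq hr hv (by rw [map_add, degree_single]; omega)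
  rw [degree_single] at hden
  have := r.pos
  omega

theorem exists_eq_pow_of_isAtomS (hr : 0 < r) {a : ℚ} (ha : IsAtomS r a) : ∃ n, a = r ^ n := by
  obtain ⟨haS, ha0, hirred⟩ := ha
  obtain ⟨α, rfl⟩ := mem_S_iff.mp haS
  obtain ⟨i, hi⟩ : α.support.Nonempty :=
    Finsupp.support_nonempty_iff.mpr fun h => ha0 (h ▸ map_zero _)
  have hα : α = (α - single i 1) + single i 1 :=
    (tsub_add_cancel_of_le (single_le_iff.mpr (Nat.one_le_iff_ne_zero.mpr
      (Finsupp.mem_support_iff.mp hi)))).symm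
  by_cases hrest : α - single i 1 = 0
  · exact ⟨i, by rw [hα, hrest, zero_add, evalPow_single, Nat.cast_one, one_mul]⟩
  · refine absurd ⟨_, r ^ i, mem_S_iff.mpr ⟨_, rfl⟩, pow_mem_S i,
      (evalPow_eq_zero_iff hr).not.mpr hrest, pow_ne_zero i hr.ne', ?_⟩ hirred
    conv_lhs => rw [hα, map_add, evalPow_single, Nat.cast_one, one_mul]

end atoms

section lengths

variable {r : ℚ}

lemma add_mem_atomLengthSet {a b : ℕ} {x y : ℚ} (ha : a ∈ atomLengthSet r x)
    (hb : b ∈ atomLengthSet r y) : a + b ∈ atomLengthSet r (x + y) := by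
  obtain ⟨f, hf, rfl⟩ := ha
  obtain ⟨g, hg, rfl⟩ := hb
  refine ⟨Fin.append f g, Fin.addCases (by simpa using hf) (by simpa using hg), ?_⟩
  simp [Fin.sum_univ_add]

lemma mem_atomLengthSet_natCast_mul (c : ℕ) {a : ℚ} (ha : IsAtomS r a) :
    c ∈ atomLengthSet r (c * a) :=
  ⟨fun _ => a, fun _ => ha, by simp⟩

/-- Starting from `c` copies of `r ^ j`, expand `den` copies of `r ^ (i + 1)` into `num` copies
of `r ^ i`, once for each `i < j`. -/
lemma add_mul_mem_atomLengthSet (hr : 1 < r) (hd : r.den ≠ 1) (j : ℕ) :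
    ∀ c, r.den ≤ c → c + j * (r.num.toNat - r.den) ∈ atomLengthSet r (c * r ^ j) := by
  induction j with
  | zero =>
    exact fun c _ => by simpa using mem_atomLengthSet_natCast_mul c (isAtomS_pow hr hd 0)
  | succ j ih =>
    intro c hc
    have hqp := den_lt_num_toNat hr
    have hsplit : (c : ℚ) * r ^ (j + 1) = ((c - r.den : ℕ) : ℚ) * r ^ (j + 1) +
        r.num.toNat * r ^ j := by
      rw [← den_mul_pow_succ (by positivity), Nat.cast_sub hc]; ring
    have hlen : c + (j + 1) * (r.num.toNat - r.den)
        = (c - r.den) + (r.num.toNat + j * (r.num.toNat - r.den)) := by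
      rw [add_one_mul]; omega
    rw [hsplit, hlen]
    exact add_mem_atomLengthSet (mem_atomLengthSet_natCast_mul _ (isAtomS_pow hr hd _))
      (ih _ hqp.le)

lemma exists_of_mem_atomLengthSet (hr : 0 < r) {t : ℕ} {x : ℚ} (ht : t ∈ atomLengthSet r x) :
    ∃ α, evalPow r α = x ∧ degree α = t := by
  obtain ⟨f, hf, rfl⟩ := ht
  choose e he using fun i => exists_eq_pow_of_isAtomS hr (hf i)
  exact ⟨∑ i, single (e i) 1, by simp [he], by simp⟩

lemma natCast_mul_pow_mem_S (c j : ℕ) : (c : ℚ) * r ^ j ∈ S r :=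
  mem_S_iff.mpr ⟨single j c, evalPow_single j c⟩

lemma natCast_mul_pow_ne_zero (hr : 0 < r) {c : ℕ} (hc : c ≠ 0) (j : ℕ) : (c : ℚ) * r ^ j ≠ 0 :=
  mul_ne_zero (Nat.cast_ne_zero.mpr hc) (pow_ne_zero j hr.ne')

lemma self_mem_Uk (hr : 1 < r) (hd : r.den ≠ 1) {k : ℕ} (hk : 0 < k) : k ∈ Uk r k :=
  have hkx := mem_atomLengthSet_natCast_mul k (isAtomS_pow hr hd 0)
  ⟨_, natCast_mul_pow_mem_S k 0, natCast_mul_pow_ne_zero (by positivity) hk.ne' 0, hkx, hkx⟩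

lemma mem_Uk_of_den_le (hr : 1 < r) (hd : r.den ≠ 1) {c : ℕ} (hc : r.den ≤ c) (j : ℕ) :
    c ∈ Uk r (c + j * (r.num.toNat - r.den)) ∧ c + j * (r.num.toNat - r.den) ∈ Uk r c := by
  have hx := natCast_mul_pow_ne_zero (by positivity) (by have := r.pos; omega : c ≠ 0) j
  have hcx := mem_atomLengthSet_natCast_mul c (isAtomS_pow hr hd j)
  have hcjx := add_mul_mem_atomLengthSet hr hd j c hc
  exact ⟨⟨_, natCast_mul_pow_mem_S c j, hx, hcjx, hcx⟩,
    ⟨_, natCast_mul_pow_mem_S c j, hx, hcx, hcjx⟩⟩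

theorem mem_Uk_iff (hr : 1 < r) (hd : r.den ≠ 1) {k : ℕ} (hk : 0 < k) (l : ℕ) :
    l ∈ Uk r k ↔ l = k ∨ (r.den ≤ k ∧ r.den ≤ l ∧ l ≡ k [MOD r.num.toNat - r.den]) := by
  constructor
  · rintro ⟨x, -, -, hkx, hlx⟩
    obtain ⟨α, rfl, rfl⟩ := exists_of_mem_atomLengthSet (by positivity) hkx
    obtain ⟨β, hβ, rfl⟩ := exists_of_mem_atomLengthSet (by positivity) hlx
    by_cases hne : degree β = degree α
    · exact Or.inl hne
    · exact Or.inr ⟨den_le_degree_of_evalPow_eq hr hβ.symm (Ne.symm hne),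
        den_le_degree_of_evalPow_eq hr hβ hne, degree_modEq_of_evalPow_eq hr hβ⟩
  · rintro (rfl | ⟨hk, hl, hlk⟩)
    · exact self_mem_Uk hr hd hk
    · rcases le_total l k with hle | hle
      · obtain ⟨j, hj⟩ := (Nat.modEq_iff_dvd' hle).mp hlk
        obtain rfl : k = l + j * (r.num.toNat - r.den) := by rw [mul_comm] at hj; omega
        exact (mem_Uk_of_den_le hr hd hl j).1
      · obtain ⟨j, hj⟩ := (Nat.modEq_iff_dvd' hle).mp hlk.symm
        obtain rfl : l = k + j * (r.num.toNat - r.den) := by rw [mul_comm] at hj; omega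
        exact (mem_Uk_of_den_le hr hd hk j).2

theorem Uk_eq_singleton (hr : 1 < r) (hd : r.den ≠ 1) {k : ℕ} (hk : 0 < k) (hkq : k < r.den) :
    Uk r k = {k} := by
  ext l
  rw [mem_Uk_iff hr hd hk, Set.mem_singleton_iff]
  exact ⟨fun h => h.resolve_right fun h' => absurd h'.1 (not_le.mpr hkq), Or.inl⟩

theorem mem_Uk_iff_of_den_le (hr : 1 < r) (hd : r.den ≠ 1) {k : ℕ} (hk : r.den ≤ k) (l : ℕ) :
    l ∈ Uk r k ↔ r.den ≤ l ∧ l ≡ k [MOD r.num.toNat - r.den] := by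
  rw [mem_Uk_iff hr hd (r.pos.trans_le hk)]
  refine ⟨?_, fun h => Or.inr ⟨hk, h⟩⟩
  rintro (rfl | ⟨-, h⟩)
  exacts [⟨hk, Nat.ModEq.refl _⟩, h]

end lengths

lemma Nat.le_and_modEq_iff_exists_eq_add_mul {q k l D : ℕ} (hqk : q ≤ k) (hkD : k < q + D) :
    q ≤ l ∧ l ≡ k [MOD D] ↔ ∃ j, l = k + j * D := by
  constructor
  · rintro ⟨hql, hlk⟩
    rcases le_or_gt k l with hle | hlt
    · obtain ⟨j, hj⟩ := (Nat.modEq_iff_dvd' hle).mp hlk.symm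
      exact ⟨j, by rw [mul_comm] at hj; omega⟩
    · have := Nat.le_of_dvd (by omega) ((Nat.modEq_iff_dvd' hlt.le).mp hlk)
      omega
  · rintro ⟨j, rfl⟩
    exact ⟨by omega, Nat.add_mul_mod_self_right k j D⟩

lemma Nat.le_and_modEq_iff_exists_int_eq_add_mul {q k m D : ℕ} (hD : 0 < D) :
    q ≤ m ∧ m ≡ k [MOD D] ↔ ∃ j : ℤ, -(((k : ℤ) - q) / D) ≤ j ∧ (m : ℤ) = k + j * D := by
  have hD' : (0 : ℤ) < D := by exact_mod_cast hD
  rw [Nat.modEq_iff_dvd]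
  constructor
  · rintro ⟨hqm, c, hc⟩
    refine ⟨-c, neg_le_neg ((Int.le_ediv_iff_mul_le hD').mpr ?_), by linarith⟩
    have : (q : ℤ) ≤ m := by exact_mod_cast hqm
    linarith
  · rintro ⟨j, hj, hm⟩
    have := (Int.le_ediv_iff_mul_le hD').mp (neg_le.mp hj)
    exact ⟨by zify; linarith, -j, by linarith⟩

theorem stmt11 (r : ℚ) (h1 : 1 < r) (hd : r.den ≠ 1) (k : ℕ) (hk : 0 < k) :
    (k < r.den → Uk r k = {k}) ∧
    (r.den ≤ k → k < r.num.toNat →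
      Uk r k = {l : ℕ | ∃ j : ℕ, l = k + j * (r.num.toNat - r.den)}) ∧
    (r.num.toNat ≤ k → ∃ L : ℤ, L < 0 ∧
      Uk r k = {m : ℕ | ∃ j : ℤ, L ≤ j ∧ (m : ℤ) = k + j * (r.num - (r.den : ℤ))}) := by
  have hqp := den_lt_num_toNat h1
  have hD : ((r.num.toNat - r.den : ℕ) : ℤ) = r.num - r.den := by
    have := Rat.num_pos.mpr (zero_lt_one.trans h1)
    omega
  refine ⟨Uk_eq_singleton h1 hd hk, fun hqk hkp => ?_, fun hpk => ?_⟩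
  · ext l
    rw [mem_Uk_iff_of_den_le h1 hd hqk]
    exact Nat.le_and_modEq_iff_exists_eq_add_mul hqk (by omega)
  · refine ⟨-(((k : ℤ) - r.den) / (r.num.toNat - r.den : ℕ)), ?_, ?_⟩
    · refine neg_neg_of_pos (one_pos.trans_le ?_)
      exact (Int.le_ediv_iff_mul_le (by omega)).mpr (by omega)
    · ext m
      rw [mem_Uk_iff_of_den_le h1 hd (by omega), ← hD]
      exact Nat.le_and_modEq_iff_exists_int_eq_add_mul (by omega)
end

section
/- Let r ∈ ℚ with 0 < r < 1 and n(r) > 1 (so d(r) > 1 and S_r is atomic), let x ∈ S_r be nonzero, and let α be a factorization of x. Then |α| = min L(x) if and only if α_i < d(r) for every i ≥ 1. Moreover, x has exactly one factorization of minimum length. -/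
open Finsupp
open scoped ENNReal

/-!
Write `r = n / d`. Since `d * r ^ (i + 1) = n * r ^ i` and `n < d`, any `d` copies of an atom
`r ^ (i + 1)` can be traded for `n` copies of `r ^ i`, which shortens the factorization; so in a
factorization of minimum length every coefficient of index `i ≥ 1` is below `d`. Two such
factorizations of the same element differ by an integer polynomial vanishing at `r` whose
non-constant coefficients have absolute value below `d`. By the rational root theorem `d`
divides its leading coefficient, so this polynomial is zero.
-/

open Polynomial

theorem Rat.den_dvd_leadingCoeff_of_aeval_eq_zero {q : ℚ} {p : ℤ[X]} (h : aeval q p = 0) :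
    (q.den : ℤ) ∣ p.leadingCoeff :=
  (Rat.associated_num_den q).2.symm.dvd.trans (den_dvd_of_is_root h)

theorem Polynomial.eq_zero_of_aeval_eq_zero_of_abs_coeff_lt_den {q : ℚ} {p : ℤ[X]}
    (h : aeval q p = 0) (hcoeff : ∀ i, 1 ≤ i → |p.coeff i| < q.den) : p = 0 := by
  rcases Nat.eq_zero_or_pos p.natDegree with hdeg | hdeg
  · rw [eq_C_of_natDegree_eq_zero hdeg, aeval_C, algebraMap_int_eq, eq_intCast,
      Int.cast_eq_zero] at h
    rw [eq_C_of_natDegree_eq_zero hdeg, h, C_0]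
  · exact leadingCoeff_eq_zero.mp <| Int.eq_zero_of_abs_lt_dvd
      (Rat.den_dvd_leadingCoeff_of_aeval_eq_zero h) (hcoeff _ hdeg)

noncomputable def factorizationPoly (α : ℕ →₀ ℕ) : ℤ[X] :=
  α.sum fun i c => C (c : ℤ) * X ^ i

@[simp]
theorem coeff_factorizationPoly (α : ℕ →₀ ℕ) (i : ℕ) : (factorizationPoly α).coeff i = α i := by
  simp +contextual [factorizationPoly, Finsupp.sum]

theorem aeval_factorizationPoly (r : ℚ) (α : ℕ →₀ ℕ) :
    aeval r (factorizationPoly α) = α.sum fun i c => (c : ℚ) * r ^ i := by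
  simp [factorizationPoly, Finsupp.sum]

theorem eq_of_isFactorization_of_lt_den {r x : ℚ} {α β : ℕ →₀ ℕ}
    (hα : IsFactorization r x α) (hβ : IsFactorization r x β)
    (hαd : ∀ i, 1 ≤ i → α i < r.den) (hβd : ∀ i, 1 ≤ i → β i < r.den) : α = β := by
  have hroot : aeval r (factorizationPoly α - factorizationPoly β) = 0 := by
    rw [map_sub, aeval_factorizationPoly, aeval_factorizationPoly, hα, hβ, sub_self]
  have hzero := eq_zero_of_aeval_eq_zero_of_abs_coeff_lt_den hroot fun i hi => by
    have := hαd i hi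
    have := hβd i hi
    rw [coeff_sub, coeff_factorizationPoly, coeff_factorizationPoly, abs_lt]
    omega
  ext i
  simpa [sub_eq_zero] using congr_arg (coeff · i) hzero

theorem isFactorization_add_single {r x : ℚ} {α : ℕ →₀ ℕ} (hα : IsFactorization r x α)
    (i c : ℕ) : IsFactorization r (x + c * r ^ i) (α + Finsupp.single i c) := by
  rw [IsFactorization, Finsupp.sum_add_index' (by simp) (fun _ _ _ => by push_cast; ring),
    Finsupp.sum_single_index (by simp), hα]

theorem flen_add (α β : ℕ →₀ ℕ) : flen (α + β) = flen α + flen β :=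
  map_add Finsupp.degree α β

theorem flen_single (i c : ℕ) : flen (Finsupp.single i c) = c :=
  Finsupp.degree_single i c

theorem exists_shorter_factorization {r x : ℚ} (h0 : 0 < r) (h1 : r < 1) {α : ℕ →₀ ℕ}
    (hα : IsFactorization r x α) {i : ℕ} (hi : r.den ≤ α (i + 1)) :
    ∃ β, IsFactorization r x β ∧ flen β < flen α := by
  obtain ⟨α', rfl⟩ : ∃ α', α = α' + Finsupp.single (i + 1) r.den := by
    refine ⟨α - Finsupp.single (i + 1) r.den, (tsub_add_cancel_of_le ?_).symm⟩
    exact Finsupp.single_le_iff.mpr hi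
  have hnum : 0 < r.num := Rat.num_pos.mpr h0
  have hlt : r.num.natAbs < r.den := by
    have := Rat.num_lt_denom_iff.mpr h1
    omega
  refine ⟨α' + Finsupp.single i r.num.natAbs, ?_, ?_⟩
  · have hexch : (r.num.natAbs : ℚ) * r ^ i = r.den * r ^ (i + 1) := by
      rw [pow_succ, mul_left_comm, mul_comm _ r, Rat.mul_den_eq_num, mul_comm,
        Nat.cast_natAbs, abs_of_pos hnum]
    have hα' := isFactorization_add_single (r := r) (α := α') rfl
    exact Eq.trans (hα' i _) (by rw [hexch]; exact Eq.trans (hα' (i + 1) r.den).symm hα)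
  · rw [flen_add, flen_add, flen_single, flen_single]
    omega

theorem lt_den_of_flen_eq_sInf {r x : ℚ} (h0 : 0 < r) (h1 : r < 1) {α : ℕ →₀ ℕ}
    (hα : IsFactorization r x α) (hmin : flen α = sInf (lengthSet r x)) :
    ∀ i, 1 ≤ i → α i < r.den := by
  intro i hi
  obtain ⟨j, rfl⟩ := Nat.exists_eq_add_of_le' hi
  by_contra! hge
  obtain ⟨β, hβ, hlt⟩ := exists_shorter_factorization h0 h1 hα hge
  exact (Nat.sInf_le (s := lengthSet r x) ⟨β, hβ, rfl⟩).not_gt (hmin ▸ hlt)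

theorem stmt13_general (r : ℚ) (h0 : 0 < r) (h1 : r < 1)
    (x : ℚ)
    (α : ℕ →₀ ℕ) (hα : IsFactorization r x α) :
    (flen α = sInf (lengthSet r x) ↔ ∀ i : ℕ, 1 ≤ i → α i < r.den) ∧
    ∃! β : ℕ →₀ ℕ, IsFactorization r x β ∧ flen β = sInf (lengthSet r x) := by
  obtain ⟨γ, hγ, hγmin⟩ := Nat.sInf_mem (⟨flen α, α, hα, rfl⟩ : (lengthSet r x).Nonempty)
  have hγd := lt_den_of_flen_eq_sInf h0 h1 hγ hγmin
  refine ⟨⟨lt_den_of_flen_eq_sInf h0 h1 hα, fun hαd => ?_⟩, γ, ⟨hγ, hγmin⟩, ?_⟩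
  · rw [eq_of_isFactorization_of_lt_den hα hγ hαd hγd, hγmin]
  · rintro β ⟨hβ, hβmin⟩
    exact eq_of_isFactorization_of_lt_den hβ hγ (lt_den_of_flen_eq_sInf h0 h1 hβ hβmin) hγd

theorem stmt13 (r : ℚ) (h0 : 0 < r) (h1 : r < 1) (hn : 1 < r.num)
    (x : ℚ) (hx : x ∈ S r) (hx0 : x ≠ 0)
    (α : ℕ →₀ ℕ) (hα : IsFactorization r x α) :
    (flen α = sInf (lengthSet r x) ↔ ∀ i : ℕ, 1 ≤ i → α i < r.den) ∧
    ∃! β : ℕ →₀ ℕ, IsFactorization r x β ∧ flen β = sInf (lengthSet r x) :=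
  stmt13_general r h0 h1 x α hα
end

section
/- Let r ∈ ℚ with 0 < r < 1 and n(r) > 1 (so d(r) > 1 and S_r is atomic), let x ∈ S_r be nonzero, and let α be any factorization of x. Then L(x) is unbounded (i.e., sup L(x) = ∞) if and only if α_i ≥ n(r) for some i ∈ ℕ₀. -/
open Finsupp
open scoped ENNReal

/-!
Write `r = n / d`. Since `n * r ^ i = d * r ^ (i + 1)`, `n` copies of the atom `r ^ i` can be traded
for `d` copies of `r ^ (i + 1)`, gaining `d - n > 0` in length and leaving a coefficient `d ≥ n`
to trade again: one coefficient `≥ n` yields arbitrarily long factorizations.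

Conversely, call a factorization reduced if its coefficients at positive indices are `< d`.
Clearing denominators turns a factorization into a mixed-radix expansion, so reduced
factorizations are unique. If all `α i < n`, then `α` is reduced, and a shortest factorization
`β ≠ α` would not be reduced; trading back `d` copies of some `r ^ (j + 1)` for `n` copies of
`r ^ j` gives a shorter factorization with a coefficient `≥ n`, which is therefore not `α` either.
So `α` is the only factorization.
-/

-- `d ^ M * ∑ i ≤ M, b i * (n / d) ^ i` with its denominators cleared.
def clearedValue (n d M : ℕ) (b : ℕ → ℕ) : ℕ :=
  ∑ i ∈ Finset.range (M + 1), b i * n ^ i * d ^ (M - i)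

lemma clearedValue_succ (n d M : ℕ) (b : ℕ → ℕ) :
    clearedValue n d (M + 1) b = d * clearedValue n d M b + b (M + 1) * n ^ (M + 1) := by
  rw [clearedValue, Finset.sum_range_succ, clearedValue, Finset.mul_sum, Nat.sub_self, pow_zero,
    mul_one]
  congr 1
  refine Finset.sum_congr rfl fun i hi => ?_
  rw [Nat.sub_add_comm (Nat.lt_succ_iff.mp (Finset.mem_range.mp hi)), pow_succ]
  ring

/-- The top coefficient is determined modulo `d` (as `n` is a unit mod `d`), hence exactly when it
is `< d`; peel it off and divide by `d`. -/
lemma eq_of_clearedValue_eq {n d : ℕ} (hcop : n.Coprime d) {b c : ℕ → ℕ}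
    (hb : ∀ j, b (j + 1) < d) (hc : ∀ j, c (j + 1) < d) :
    ∀ M, clearedValue n d M b = clearedValue n d M c → ∀ i ≤ M, b i = c i := by
  intro M
  induction M with
  | zero =>
    intro h i hi
    simpa [Nat.le_zero.mp hi, clearedValue] using h
  | succ M ih =>
    intro h i hi
    rw [clearedValue_succ, clearedValue_succ] at h
    have hmod : b (M + 1) * n ^ (M + 1) ≡ c (M + 1) * n ^ (M + 1) [MOD d] := by
      simpa [Nat.ModEq, Nat.mul_add_mod] using congrArg (· % d) h
    have htop : b (M + 1) = c (M + 1) :=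
      Nat.ModEq.eq_of_lt_of_lt
        (Nat.ModEq.cancel_right_of_coprime (hcop.symm.pow_right _) hmod) (hb M) (hc M)
    rcases Nat.of_le_succ hi with hi | rfl
    · rw [htop, Nat.add_right_cancel_iff] at h
      exact ih (Nat.eq_of_mul_eq_mul_left (Nat.zero_lt_of_lt (hb 0)) h) i hi
    · exact htop

lemma isFactorization_iff_weight {r x : ℚ} {α : ℕ →₀ ℕ} :
    IsFactorization r x α ↔ Finsupp.weight (r ^ ·) α = x := by
  simp [IsFactorization, Finsupp.weight_apply, nsmul_eq_mul]

lemma flen_eq_degree (α : ℕ →₀ ℕ) : flen α = α.degree := rfl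

lemma IsFactorization.exists_exchange {r x : ℚ} {β : ℕ →₀ ℕ} (hβ : IsFactorization r x β)
    {i j c e : ℕ} (hc : c ≤ β i) (hce : (c : ℚ) * r ^ i = e * r ^ j) :
    ∃ γ, IsFactorization r x γ ∧ flen γ + c = flen β + e ∧ e ≤ γ j := by
  obtain ⟨γ, rfl⟩ : ∃ γ, β = γ + single i c :=
    ⟨β - single i c, (tsub_add_cancel_of_le (single_le_iff.mpr hc)).symm⟩
  refine ⟨γ + single j e, ?_, ?_, by simp⟩
  · rw [isFactorization_iff_weight] at hβ ⊢
    simpa [Finsupp.weight_single, nsmul_eq_mul, hce] using hβ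
  · simp only [flen_eq_degree, map_add, degree_single]
    omega

section Exchange

variable {r x : ℚ} {n d : ℕ}

lemma natCast_mul_pow_eq_mul_pow_succ (hr : r * d = n) (j : ℕ) :
    (n : ℚ) * r ^ j = d * r ^ (j + 1) := by
  rw [← hr, pow_succ]
  ring

lemma natCast_clearedValue (hr : r * d = n) {β : ℕ →₀ ℕ} (hβ : IsFactorization r x β) {M : ℕ}
    (hM : β.support ⊆ Finset.range (M + 1)) :
    (clearedValue n d M β : ℚ) = x * d ^ M := by
  rw [← hβ, Finsupp.sum_of_support_subset β hM _ (by simp), Finset.sum_mul,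
    clearedValue]
  push_cast
  refine Finset.sum_congr rfl fun i hi => ?_
  obtain ⟨k, rfl⟩ := Nat.exists_eq_add_of_le (Nat.lt_succ_iff.mp (Finset.mem_range.mp hi))
  rw [Nat.add_sub_cancel_left, ← hr, pow_add, mul_pow]
  ring

lemma eq_of_isFactorization_of_lt_den_s14 (hr : r * d = n) (hcop : n.Coprime d)
    {β γ : ℕ →₀ ℕ} (hβ : IsFactorization r x β) (hγ : IsFactorization r x γ)
    (hβd : ∀ j, β (j + 1) < d) (hγd : ∀ j, γ (j + 1) < d) : β = γ := by
  classical
  set M := (β.support ∪ γ.support).sup id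
  have hsupp : ∀ {δ : ℕ →₀ ℕ}, δ.support ⊆ β.support ∪ γ.support →
      δ.support ⊆ Finset.range (M + 1) := fun h i hi =>
    Finset.mem_range.mpr (Nat.lt_succ_of_le (Finset.le_sup (f := id) (h hi)))
  have hβM := hsupp Finset.subset_union_left
  have hγM := hsupp Finset.subset_union_right
  have heq : clearedValue n d M β = clearedValue n d M γ := by
    exact_mod_cast (natCast_clearedValue hr hβ hβM).trans (natCast_clearedValue hr hγ hγM).symm
  ext i
  by_cases hi : i ≤ M
  · exact eq_of_clearedValue_eq hcop hβd hγd M heq i hi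
  · have hi' : i ∉ Finset.range (M + 1) := by simpa using hi
    rw [Finsupp.notMem_support_iff.mp (mt (@hβM i) hi'),
      Finsupp.notMem_support_iff.mp (mt (@hγM i) hi')]

lemma eq_of_isFactorization_of_lt (hr : r * d = n) (hcop : n.Coprime d) (hnd : n < d)
    {α : ℕ →₀ ℕ} (hα : IsFactorization r x α) (hαn : ∀ i, α i < n) :
    ∀ {β : ℕ →₀ ℕ}, IsFactorization r x β → β = α := by
  intro β hβ
  induction hlen : flen β using Nat.strong_induction_on generalizing β with
  | _ m ih =>
    by_cases hred : ∃ j, d ≤ β (j + 1)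
    · obtain ⟨j, hj⟩ := hred
      obtain ⟨γ, hγ, hlenγ, hγj⟩ :=
        hβ.exists_exchange hj (natCast_mul_pow_eq_mul_pow_succ hr j).symm
      have hγα : γ = α := ih (flen γ) (by omega) hγ rfl
      exact absurd (hγα ▸ hγj) (hαn j).not_ge
    · simp only [not_exists, not_le] at hred
      exact eq_of_isFactorization_of_lt_den_s14 hr hcop hβ hα hred fun j => (hαn _).trans hnd

lemma bddAbove_lengthSet (hr : r * d = n) (hcop : n.Coprime d) (hnd : n < d)
    {α : ℕ →₀ ℕ} (hα : IsFactorization r x α) (hαn : ∀ i, α i < n) :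
    BddAbove (lengthSet r x) := by
  refine ⟨flen α, ?_⟩
  rintro _ ⟨β, hβ, rfl⟩
  rw [eq_of_isFactorization_of_lt hr hcop hnd hα hαn hβ]

lemma not_bddAbove_lengthSet (hr : r * d = n) (hnd : n < d)
    {α : ℕ →₀ ℕ} (hα : IsFactorization r x α) {i : ℕ} (hi : n ≤ α i) :
    ¬ BddAbove (lengthSet r x) := by
  have hlong : ∀ k, ∃ β j, IsFactorization r x β ∧ n ≤ β j ∧ k ≤ flen β := by
    intro k
    induction k with
    | zero => exact ⟨α, i, hα, hi, Nat.zero_le _⟩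
    | succ k ih =>
      obtain ⟨β, j, hβ, hβj, hk⟩ := ih
      obtain ⟨γ, hγ, hlenγ, hγj⟩ :=
        hβ.exists_exchange hβj (natCast_mul_pow_eq_mul_pow_succ hr j)
      exact ⟨γ, j + 1, hγ, hnd.le.trans hγj, by omega⟩
  rintro ⟨b, hb⟩
  obtain ⟨β, -, hβ, -, hlen⟩ := hlong (b + 1)
  have := hb ⟨β, hβ, rfl⟩
  omega

end Exchange

theorem stmt14_general (r : ℚ) (h0 : 0 < r) (h1 : r < 1)
    (x : ℚ)
    (α : ℕ →₀ ℕ) (hα : IsFactorization r x α) :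
    ¬ BddAbove (lengthSet r x) ↔ ∃ i : ℕ, r.num.toNat ≤ α i := by
  have hnum : 0 ≤ r.num := (Rat.num_pos.mpr h0).le
  have hr : r * r.den = r.num.toNat := by
    rw [Rat.mul_den_eq_num]
    exact_mod_cast (Int.toNat_of_nonneg hnum).symm
  have hcop : r.num.toNat.Coprime r.den := by
    rw [show r.num.toNat = r.num.natAbs by omega]
    exact r.reduced
  have hnd : r.num.toNat < r.den := by
    have := Rat.num_lt_denom_iff.mpr h1
    omega
  constructor
  · intro hunb
    by_contra! hlt
    exact hunb (bddAbove_lengthSet hr hcop hnd hα hlt)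
  · rintro ⟨i, hi⟩
    exact not_bddAbove_lengthSet hr hnd hα hi

theorem stmt14 (r : ℚ) (h0 : 0 < r) (h1 : r < 1) (hn : 1 < r.num)
    (x : ℚ) (hx : x ∈ S r) (hx0 : x ≠ 0)
    (α : ℕ →₀ ℕ) (hα : IsFactorization r x α) :
    ¬ BddAbove (lengthSet r x) ↔ ∃ i : ℕ, r.num.toNat ≤ α i :=
  stmt14_general r h0 h1 x α hα
end
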